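/- arXiv:2204.04829 — 2 statements merged into one kernel-verified Lean document; each statement's English description precedes it below -/
import Mathlib

section
/- Let n ≥ 2. There exists a constant C > 0 depending only on n with the following property: for all points M, y ∈ ℝⁿ, all radii 0 < ρ ≤ R with B_ρ(y) ⊆ B_R(M), and every continuously differentiable function u : ℝⁿ → ℂ that vanishes on the closed ball of radius ρ centered at y, one has ∫_{B_R(M)} |u(x)|² dx ≤ C · R² · (R/ρ)^{n−2} · κ · ∫_{B_R(M)} |∇u(x)|² dx, where κ = log(R/ρ) + 1 if n = 2 and κ = 1 if n ≥ 3. -/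
/-!
Along each ray from `y` the function `u` vanishes at distance `ρ`, so the fundamental theorem of
calculus and the Cauchy–Schwarz inequality with weight `t ^ (n - 1)` give
`|u (y + r ω)|² ≤ (∫_ρ^{2R} t^{1-n} dt) · ∫_ρ^{2R} t^{n-1} |∇u (y + t ω)|² dt`; the segment stays in
the convex ball `B_R(M) ⊆ B_{2R}(y)`. Integrating in polar coordinates around `y`, the radial
weight `r ^ (n - 1)` over `(0, 2R)` contributes `(2R)^n / n`, and the right-hand side reassembles
into `∫ |∇u|²`. The product `(2R)^n / n · ∫_ρ^{2R} t^{1-n} dt` is at most `2^n R² (R/ρ)^{n-2}` for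
`n ≥ 3`, and equals `2 R² log (2R/ρ)` for `n = 2`.
-/

open MeasureTheory Metric Set
open scoped ENNReal

theorem sq_lintegral_le_lintegral_inv_mul_lintegral_mul_sq {α : Type*} [MeasurableSpace α]
    {μ : Measure α} {f w : α → ℝ≥0∞} (hf : AEMeasurable f μ) (hw : AEMeasurable w μ)
    (hw₀ : ∀ᵐ x ∂μ, w x ≠ 0) (hw_top : ∀ᵐ x ∂μ, w x ≠ ∞) :
    (∫⁻ x, f x ∂μ) ^ 2 ≤ (∫⁻ x, (w x)⁻¹ ∂μ) * ∫⁻ x, w x * f x ^ 2 ∂μ := by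
  have hsq : ∀ c : ℝ≥0∞, (c ^ (1 / 2 : ℝ)) ^ (2 : ℝ) = c := fun c => by
    rw [← ENNReal.rpow_mul]; norm_num
  have hfactor : ∀ᵐ x ∂μ, f x = (w x)⁻¹ ^ (1 / 2 : ℝ) * (w x ^ (1 / 2 : ℝ) * f x) := by
    filter_upwards [hw₀, hw_top] with x h₀ h_top
    rw [← mul_assoc, ← ENNReal.mul_rpow_of_nonneg _ _ (by norm_num),
      ENNReal.inv_mul_cancel h₀ h_top, ENNReal.one_rpow, one_mul]
  have holder := ENNReal.lintegral_mul_le_Lp_mul_Lq μ Real.HolderConjugate.two_two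
    (f := fun x => (w x)⁻¹ ^ (1 / 2 : ℝ)) (g := fun x => w x ^ (1 / 2 : ℝ) * f x)
    (hw.inv.pow_const _) ((hw.pow_const _).mul hf)
  calc (∫⁻ x, f x ∂μ) ^ 2
      ≤ ((∫⁻ x, ((w x)⁻¹ ^ (1 / 2 : ℝ)) ^ (2 : ℝ) ∂μ) ^ (1 / 2 : ℝ) *
          (∫⁻ x, (w x ^ (1 / 2 : ℝ) * f x) ^ (2 : ℝ) ∂μ) ^ (1 / 2 : ℝ)) ^ 2 := by
        rw [lintegral_congr_ae hfactor]; gcongr; exact holder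
    _ = (∫⁻ x, (w x)⁻¹ ∂μ) * ∫⁻ x, w x * f x ^ 2 ∂μ := by
        simp only [ENNReal.mul_rpow_of_nonneg _ _ zero_le_two, hsq, ENNReal.rpow_two]
        rw [mul_pow, ← ENNReal.rpow_two, ← ENNReal.rpow_two, hsq, hsq]

theorem lintegral_Ioo_ofReal_pow (m : ℕ) {a : ℝ} (ha : 0 ≤ a) :
    ∫⁻ r in Ioo 0 a, ENNReal.ofReal (r ^ m) = ENNReal.ofReal (a ^ (m + 1) / (m + 1)) := by
  rw [← ofReal_integral_eq_lintegral_ofReal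
      ((continuous_pow m).integrableOn_Icc.mono_set Ioo_subset_Icc_self)
      ((ae_restrict_mem measurableSet_Ioo).mono fun r hr => pow_nonneg hr.1.le m),
    ← integral_Ioc_eq_integral_Ioo, ← intervalIntegral.integral_of_le ha, integral_pow]
  simp

theorem lintegral_Icc_inv_ofReal_pow (m : ℕ) {ρ b : ℝ} (hρ : 0 < ρ) (hρb : ρ ≤ b) :
    ∫⁻ t in Icc ρ b, (ENNReal.ofReal (t ^ m))⁻¹ = ENNReal.ofReal (∫ t in ρ..b, (t ^ m)⁻¹) := by
  have hpos : ∀ t ∈ Icc ρ b, 0 < t ^ m := fun t ht => pow_pos (hρ.trans_le ht.1) m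
  rw [intervalIntegral.integral_of_le hρb, integral_Icc_eq_integral_Ioc.symm,
    ofReal_integral_eq_lintegral_ofReal]
  · exact setLIntegral_congr_fun measurableSet_Icc fun t ht =>
      (ENNReal.ofReal_inv_of_pos (hpos t ht)).symm
  · exact ((continuous_pow m).continuousOn.inv₀ fun t ht => (hpos t ht).ne').integrableOn_Icc
  · exact (ae_restrict_mem measurableSet_Icc).mono fun t ht => (inv_pos.2 (hpos t ht)).le

theorem integral_norm_sq_le_of_lintegral_le {α F G : Type*} [MeasurableSpace α] {μ : Measure α}
    [NormedAddCommGroup F] [NormedAddCommGroup G] {f : α → F} {g : α → G} {c : ℝ} (hc : 0 ≤ c)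
    (hf : AEStronglyMeasurable f μ) (hg : Integrable (fun x => ‖g x‖ ^ 2) μ)
    (h : ∫⁻ x, ‖f x‖ₑ ^ 2 ∂μ ≤ ENNReal.ofReal c * ∫⁻ x, ‖g x‖ₑ ^ 2 ∂μ) :
    ∫ x, ‖f x‖ ^ 2 ∂μ ≤ c * ∫ x, ‖g x‖ ^ 2 ∂μ := by
  simp_rw [← ofReal_norm, ← ENNReal.ofReal_pow (norm_nonneg _)] at h
  rw [← ofReal_integral_eq_lintegral_ofReal hg (ae_of_all _ fun x => by positivity),
    ← ENNReal.ofReal_mul hc] at h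
  rw [integral_eq_lintegral_of_nonneg_ae (f := fun x => ‖f x‖ ^ 2)
    (ae_of_all _ fun x => by positivity) (hf.norm.pow 2)]
  exact ENNReal.toReal_le_of_le_ofReal (mul_nonneg hc (integral_nonneg fun x => by positivity)) h

section Polar

variable {E : Type*} [NormedAddCommGroup E] [NormedSpace ℝ E] [MeasurableSpace E] [BorelSpace E]
  [FiniteDimensional ℝ E] [Nontrivial E] (μ : Measure E) [μ.IsAddHaarMeasure]

theorem lintegral_volumeIoiPow (m : ℕ) {f : ℝ → ℝ≥0∞} (hf : Measurable f) :
    ∫⁻ r, f r ∂(Measure.volumeIoiPow m) = ∫⁻ r in Ioi 0, ENNReal.ofReal (r ^ m) * f r := by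
  rw [Measure.volumeIoiPow, lintegral_withDensity_eq_lintegral_mul _
    (measurable_subtype_coe.pow_const m).ennreal_ofReal
    (show Measurable fun r : Ioi (0 : ℝ) => f r from hf.comp measurable_subtype_coe)]
  exact lintegral_subtype_comap measurableSet_Ioi fun r => ENNReal.ofReal (r ^ m) * f r

theorem lintegral_eq_lintegral_toSphere_lintegral_Ioi {f : E → ℝ≥0∞}
    (hf : Measurable f) :
    ∫⁻ x, f x ∂μ = ∫⁻ ω : sphere (0 : E) 1, (∫⁻ r in Ioi 0,
      ENNReal.ofReal (r ^ (Module.finrank ℝ E - 1)) * f (r • (ω : E))) ∂μ.toSphere := by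
  have hpolar : Measurable fun p : sphere (0 : E) 1 × Ioi (0 : ℝ) => f ((p.2 : ℝ) • (p.1 : E)) :=
    hf.comp ((measurable_subtype_coe.comp measurable_snd).smul
      (measurable_subtype_coe.comp measurable_fst))
  calc ∫⁻ x, f x ∂μ = ∫⁻ x : ({0}ᶜ : Set E), f x ∂(μ.comap Subtype.val) := by
        rw [lintegral_subtype_comap (measurableSet_singleton 0).compl, restrict_compl_singleton]
    _ = ∫⁻ p, f ((p.2 : ℝ) • (p.1 : E))
          ∂(μ.toSphere.prod (Measure.volumeIoiPow (Module.finrank ℝ E - 1))) := by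
        rw [← μ.measurePreserving_homeomorphUnitSphereProd.lintegral_comp_emb
          (homeomorphUnitSphereProd E).measurableEmbedding]
        congr 1 with x
        simp [smul_smul, mul_inv_cancel₀ (norm_ne_zero_iff.2 x.2)]
    _ = _ := by
        rw [lintegral_prod _ hpolar.aemeasurable]
        congr 1 with ω
        exact lintegral_volumeIoiPow _ (f := fun r : ℝ => f (r • (ω : E)))
          (hf.comp (measurable_id.smul measurable_const))

theorem lintegral_le_mul_of_forall_lintegral_Ioi_le {f g : E → ℝ≥0∞}
    (hf : Measurable f) (hg : Measurable g) {c : ℝ≥0∞}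
    (h : ∀ ω ∈ sphere (0 : E) 1,
      ∫⁻ r in Ioi 0, ENNReal.ofReal (r ^ (Module.finrank ℝ E - 1)) * f (r • ω) ≤
        c * ∫⁻ r in Ioi 0, ENNReal.ofReal (r ^ (Module.finrank ℝ E - 1)) * g (r • ω)) :
    ∫⁻ x, f x ∂μ ≤ c * ∫⁻ x, g x ∂μ := by
  have hradial : Measurable fun ω : sphere (0 : E) 1 =>
      ∫⁻ r in Ioi 0, ENNReal.ofReal (r ^ (Module.finrank ℝ E - 1)) * g (r • (ω : E)) :=
    Measurable.lintegral_prod_right (((measurable_snd.pow_const _).ennreal_ofReal).mul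
      (hg.comp (measurable_snd.smul (measurable_subtype_coe.comp measurable_fst))))
  rw [lintegral_eq_lintegral_toSphere_lintegral_Ioi μ hf,
    lintegral_eq_lintegral_toSphere_lintegral_Ioi μ hg, ← lintegral_const_mul c hradial]
  exact lintegral_mono fun ω => h ω ω.2

end Polar

section Segment

variable {E F : Type*} [NormedAddCommGroup E] [NormedSpace ℝ E]
  [NormedAddCommGroup F] [NormedSpace ℝ F]

theorem enorm_le_lintegral_enorm_fderiv_along_segment {u : E → F} (hu : ContDiff ℝ 1 u)
    {y ω : E} (hω : ‖ω‖ ≤ 1) {ρ r : ℝ} (hρr : ρ ≤ r) (hzero : u (y + ρ • ω) = 0) :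
    ‖u (y + r • ω)‖ₑ ≤ ∫⁻ t in Icc ρ r, ‖fderiv ℝ u (y + t • ω)‖ₑ := by
  have hline : ∀ t : ℝ, HasDerivAt (fun s : ℝ => y + s • ω) ω t := fun t => by
    simpa using ((hasDerivAt_id t).smul_const ω).const_add y
  have hderiv : ∀ t, ‖deriv (fun s : ℝ => u (y + s • ω)) t‖ₑ ≤ ‖fderiv ℝ u (y + t • ω)‖ₑ := by
    intro t
    have hd : HasDerivAt (fun s : ℝ => u (y + s • ω)) (fderiv ℝ u (y + t • ω) ω) t :=
      (hu.differentiable one_ne_zero _).hasFDerivAt.comp_hasDerivAt t (hline t)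
    rw [hd.deriv]
    calc ‖fderiv ℝ u (y + t • ω) ω‖ₑ ≤ ‖fderiv ℝ u (y + t • ω)‖ₑ * ‖ω‖ₑ :=
          ContinuousLinearMap.le_opENorm _ _
      _ ≤ ‖fderiv ℝ u (y + t • ω)‖ₑ := by
          refine mul_le_of_le_one_right' ?_
          rwa [← ofReal_norm, ENNReal.ofReal_le_one]
  have hray : ContDiff ℝ 1 fun s : ℝ => u (y + s • ω) := by fun_prop
  have hftc := enorm_sub_le_lintegral_deriv_of_contDiffOn_Icc hray.contDiffOn hρr
  rw [hzero, sub_zero] at hftc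
  exact hftc.trans (lintegral_mono hderiv)

theorem enorm_sq_le_along_segment {u : E → F} (hu : ContDiff ℝ 1 u) {y ω : E} (hω : ‖ω‖ ≤ 1)
    {ρ r : ℝ} (hρ : 0 < ρ) (hρr : ρ ≤ r) (hzero : u (y + ρ • ω) = 0) (m : ℕ) :
    ‖u (y + r • ω)‖ₑ ^ 2 ≤ (∫⁻ t in Icc ρ r, (ENNReal.ofReal (t ^ m))⁻¹) *
      ∫⁻ t in Icc ρ r, ENNReal.ofReal (t ^ m) * ‖fderiv ℝ u (y + t • ω)‖ₑ ^ 2 := by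
  have hpos : ∀ᵐ t ∂volume.restrict (Icc ρ r), 0 < t :=
    ae_restrict_of_forall_mem measurableSet_Icc fun t ht => hρ.trans_le ht.1
  calc ‖u (y + r • ω)‖ₑ ^ 2 ≤ (∫⁻ t in Icc ρ r, ‖fderiv ℝ u (y + t • ω)‖ₑ) ^ 2 := by
        gcongr; exact enorm_le_lintegral_enorm_fderiv_along_segment hu hω hρr hzero
    _ ≤ _ := by
        refine sq_lintegral_le_lintegral_inv_mul_lintegral_mul_sq ?_ (by fun_prop)
          (hpos.mono fun t ht => (ENNReal.ofReal_pos.2 (pow_pos ht m)).ne')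
          (ae_of_all _ fun _ => ENNReal.ofReal_ne_top)
        exact ((hu.continuous_fderiv one_ne_zero).comp (by fun_prop)).enorm.aemeasurable

section Domain

variable {D : Set E} {y ω : E} {a ρ : ℝ} {u : E → F}

theorem enorm_sq_le_of_mem_ray (hD : Convex ℝ D) (hy : y ∈ D) (hDa : D ⊆ ball y a) (hρ : 0 < ρ)
    (hu : ContDiff ℝ 1 u) (hu₀ : ∀ x ∈ closedBall y ρ, u x = 0) (hω : ‖ω‖ = 1) (m : ℕ)
    {r : ℝ} (hr : 0 ≤ r) (hrD : y + r • ω ∈ D) :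
    ‖u (y + r • ω)‖ₑ ^ 2 ≤ (∫⁻ t in Icc ρ a, (ENNReal.ofReal (t ^ m))⁻¹) *
      ∫⁻ t in Ioi 0, ENNReal.ofReal (t ^ m) *
        D.indicator (fun x => ‖fderiv ℝ u x‖ₑ ^ 2) (y + t • ω) := by
  have hnorm : ∀ {t : ℝ}, 0 ≤ t → ‖t • ω‖ = t := fun ht => by
    rw [norm_smul, hω, mul_one, Real.norm_of_nonneg ht]
  rcases le_or_gt r ρ with hrρ | hρr
  · rw [hu₀ _ (by rwa [mem_closedBall, dist_eq_norm, add_sub_cancel_left, hnorm hr])]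
    simp
  have hra : r < a := by
    simpa [hnorm hr] using hDa hrD
  have hsegment : ∀ t ∈ Icc ρ r, y + t • ω ∈ D := fun t ht => by
    have h := hD.add_smul_sub_mem hy hrD
      ⟨div_nonneg (hρ.le.trans ht.1) hr, div_le_one_of_le₀ ht.2 hr⟩
    rwa [add_sub_cancel_left, smul_smul, div_mul_cancel₀ _ (hρ.trans hρr).ne'] at h
  refine (enorm_sq_le_along_segment hu hω.le hρ hρr.le
    (hu₀ _ (by rw [mem_closedBall, dist_eq_norm, add_sub_cancel_left, hnorm hρ.le])) m).trans ?_
  gcongr ?_ * ?_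
  · exact lintegral_mono_set (Icc_subset_Icc_right hra.le)
  · calc ∫⁻ t in Icc ρ r, ENNReal.ofReal (t ^ m) * ‖fderiv ℝ u (y + t • ω)‖ₑ ^ 2
        = ∫⁻ t in Icc ρ r, ENNReal.ofReal (t ^ m) *
            D.indicator (fun x => ‖fderiv ℝ u x‖ₑ ^ 2) (y + t • ω) :=
          setLIntegral_congr_fun measurableSet_Icc fun t ht => by
            rw [indicator_of_mem (hsegment t ht)]
      _ ≤ _ := lintegral_mono_set fun t ht => hρ.trans_le ht.1

theorem lintegral_Ioi_enorm_sq_le (hD : Convex ℝ D) (hy : y ∈ D) (hDa : D ⊆ ball y a)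
    (hρ : 0 < ρ) (hu : ContDiff ℝ 1 u) (hu₀ : ∀ x ∈ closedBall y ρ, u x = 0) (hω : ‖ω‖ = 1)
    (m : ℕ) :
    ∫⁻ r in Ioi 0, ENNReal.ofReal (r ^ m) * D.indicator (fun x => ‖u x‖ₑ ^ 2) (y + r • ω) ≤
      (∫⁻ r in Ioo 0 a, ENNReal.ofReal (r ^ m)) * (∫⁻ t in Icc ρ a, (ENNReal.ofReal (t ^ m))⁻¹) *
        ∫⁻ r in Ioi 0, ENNReal.ofReal (r ^ m) *
          D.indicator (fun x => ‖fderiv ℝ u x‖ₑ ^ 2) (y + r • ω) := by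
  set B := (∫⁻ t in Icc ρ a, (ENNReal.ofReal (t ^ m))⁻¹) *
    ∫⁻ r in Ioi 0, ENNReal.ofReal (r ^ m) * D.indicator (fun x => ‖fderiv ℝ u x‖ₑ ^ 2) (y + r • ω)
  have hpointwise : ∀ r ∈ Ioi (0 : ℝ),
      ENNReal.ofReal (r ^ m) * D.indicator (fun x => ‖u x‖ₑ ^ 2) (y + r • ω) ≤
        (Ioo 0 a).indicator (fun r => ENNReal.ofReal (r ^ m)) r * B := by
    intro r hr
    by_cases hrD : y + r • ω ∈ D
    · have hra : r < a := by
        simpa [norm_smul, hω, abs_of_pos (mem_Ioi.1 hr)] using hDa hrD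
      rw [indicator_of_mem hrD, indicator_of_mem (show r ∈ Ioo 0 a from ⟨hr, hra⟩)]
      gcongr
      exact enorm_sq_le_of_mem_ray hD hy hDa hρ hu hu₀ hω m (le_of_lt hr) hrD
    · simp [indicator_of_notMem hrD]
  calc _ ≤ ∫⁻ r in Ioi 0, (Ioo 0 a).indicator (fun r => ENNReal.ofReal (r ^ m)) r * B :=
        setLIntegral_mono' measurableSet_Ioi hpointwise
    _ ≤ ∫⁻ r, (Ioo 0 a).indicator (fun r => ENNReal.ofReal (r ^ m)) r * B :=
        setLIntegral_le_lintegral _ _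
    _ = (∫⁻ r in Ioo 0 a, ENNReal.ofReal (r ^ m)) * B := by
        rw [lintegral_mul_const _ ((by fun_prop : Measurable fun r : ℝ => ENNReal.ofReal (r ^ m)
          ).indicator measurableSet_Ioo), lintegral_indicator measurableSet_Ioo]
    _ = _ := (mul_assoc _ _ _).symm

variable [MeasurableSpace E] [BorelSpace E] [FiniteDimensional ℝ E] [Nontrivial E]
  (μ : Measure E) [μ.IsAddHaarMeasure]

theorem setLIntegral_enorm_sq_le_of_eq_zero_on_closedBall (hD : Convex ℝ D)
    (hDm : MeasurableSet D) (hy : y ∈ D) (hDa : D ⊆ ball y a) (hρ : 0 < ρ)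
    (hu : ContDiff ℝ 1 u) (hu₀ : ∀ x ∈ closedBall y ρ, u x = 0) :
    ∫⁻ x in D, ‖u x‖ₑ ^ 2 ∂μ ≤
      (∫⁻ r in Ioo 0 a, ENNReal.ofReal (r ^ (Module.finrank ℝ E - 1))) *
        (∫⁻ t in Icc ρ a, (ENNReal.ofReal (t ^ (Module.finrank ℝ E - 1)))⁻¹) *
          ∫⁻ x in D, ‖fderiv ℝ u x‖ₑ ^ 2 ∂μ := by
  have hmeas : ∀ {φ : E → ℝ≥0∞}, Measurable φ → Measurable fun z => D.indicator φ (y + z) :=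
    fun hφ => (hφ.indicator hDm).comp (measurable_const_add y)
  rw [← lintegral_indicator hDm, ← lintegral_indicator hDm,
    ← lintegral_add_left_eq_self _ y, ← lintegral_add_left_eq_self (D.indicator _) y]
  exact lintegral_le_mul_of_forall_lintegral_Ioi_le μ
    (hmeas (hu.continuous.enorm.measurable.pow_const 2))
    (hmeas ((hu.continuous_fderiv one_ne_zero).measurable.enorm.pow_const 2))
    fun ω hω => lintegral_Ioi_enorm_sq_le hD hy hDa hρ hu hu₀ (mem_sphere_zero_iff_norm.1 hω) _

theorem setIntegral_norm_sq_le_of_eq_zero_on_closedBall (hD : Convex ℝ D)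
    (hDm : MeasurableSet D) (hy : y ∈ D) (hDa : D ⊆ ball y a) (hρ : 0 < ρ) (hρa : ρ ≤ a)
    (hu : ContDiff ℝ 1 u) (hu₀ : ∀ x ∈ closedBall y ρ, u x = 0) :
    ∫ x in D, ‖u x‖ ^ 2 ∂μ ≤
      a ^ Module.finrank ℝ E / Module.finrank ℝ E *
        (∫ t in ρ..a, (t ^ (Module.finrank ℝ E - 1))⁻¹) * ∫ x in D, ‖fderiv ℝ u x‖ ^ 2 ∂μ := by
  have hd : 0 < Module.finrank ℝ E := Module.finrank_pos
  have ha : 0 ≤ a := hρ.le.trans hρa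
  have hV : ENNReal.ofReal (a ^ Module.finrank ℝ E / Module.finrank ℝ E) =
      ∫⁻ r in Ioo 0 a, ENNReal.ofReal (r ^ (Module.finrank ℝ E - 1)) := by
    rw [lintegral_Ioo_ofReal_pow _ ha, Nat.sub_add_cancel hd, Nat.cast_pred hd, sub_add_cancel]
  have hA : 0 ≤ ∫ t in ρ..a, (t ^ (Module.finrank ℝ E - 1))⁻¹ :=
    intervalIntegral.integral_nonneg hρa fun t ht => by have := hρ.trans_le ht.1; positivity
  have hgrad : IntegrableOn (fun x => ‖fderiv ℝ u x‖ ^ 2) D μ :=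
    (((hu.continuous_fderiv one_ne_zero).norm.pow 2).continuousOn.integrableOn_compact
      (isCompact_closedBall y a)).mono_set (hDa.trans ball_subset_closedBall)
  refine integral_norm_sq_le_of_lintegral_le (by positivity) hu.continuous.aestronglyMeasurable
    hgrad ?_
  rw [ENNReal.ofReal_mul (by positivity), hV, ← lintegral_Icc_inv_ofReal_pow _ hρ hρa]
  exact setLIntegral_enorm_sq_le_of_eq_zero_on_closedBall μ hD hDm hy hDa hρ hu hu₀

end Domain

end Segment

theorem integral_inv_pow_le (k : ℕ) {ρ b : ℝ} (hρ : 0 < ρ) (hρb : ρ ≤ b) :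
    ∫ t in ρ..b, (t ^ (k + 2))⁻¹ ≤ (ρ ^ (k + 1))⁻¹ := by
  have h0 : (0 : ℝ) ∉ uIcc ρ b := by
    rw [uIcc_of_le hρb]; exact fun h => hρ.not_ge h.1
  simp_rw [← zpow_natCast, ← zpow_neg]
  rw [integral_zpow (Or.inr ⟨by omega, h0⟩), div_le_iff_of_neg (by push_cast; linarith)]
  have hb : 0 ≤ b ^ (-((k + 2 : ℕ) : ℤ) + 1) := zpow_nonneg (hρ.le.trans hρb) _
  have hρ' : 0 ≤ ρ ^ (-((k + 2 : ℕ) : ℤ) + 1) := zpow_nonneg hρ.le _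
  rw [show -((k + 2 : ℕ) : ℤ) + 1 = -((k + 1 : ℕ) : ℤ) by push_cast; ring] at *
  push_cast at *
  nlinarith [mul_nonneg (Nat.cast_nonneg k : (0 : ℝ) ≤ k) hρ']

theorem pow_div_mul_integral_inv_pow_le {n : ℕ} (hn : 2 ≤ n) {ρ R : ℝ} (hρ : 0 < ρ)
    (hρR : ρ ≤ R) :
    (2 * R) ^ n / n * ∫ t in ρ..2 * R, (t ^ (n - 1))⁻¹ ≤
      2 ^ n * R ^ 2 * (R / ρ) ^ (n - 2) * (if n = 2 then Real.log (R / ρ) + 1 else 1) := by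
  have hR : 0 < R := hρ.trans_le hρR
  obtain rfl | ⟨k, rfl⟩ : n = 2 ∨ ∃ k, n = k + 3 := by
    rcases Nat.lt_or_ge n 3 with h | h
    · left; omega
    · right; exact ⟨n - 3, by omega⟩
  · have hlog : Real.log (2 * R / ρ) ≤ Real.log (R / ρ) + 1 := by
      rw [mul_div_assoc, Real.log_mul two_ne_zero (div_pos hR hρ).ne']
      linarith [Real.log_two_lt_d9]
    have hL : 0 ≤ Real.log (R / ρ) := Real.log_nonneg ((one_le_div hρ).2 hρR)
    simp only [Nat.reduceSub, pow_one, integral_inv_of_pos hρ (by linarith : 0 < 2 * R),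
      pow_zero, if_true]
    nlinarith [sq_nonneg R]
  · rw [if_neg (by omega), mul_one, show k + 3 - 1 = k + 2 by omega,
      show k + 3 - 2 = k + 1 by omega]
    calc (2 * R) ^ (k + 3) / ((k + 3 : ℕ) : ℝ) * ∫ t in ρ..2 * R, (t ^ (k + 2))⁻¹
        ≤ (2 * R) ^ (k + 3) * (ρ ^ (k + 1))⁻¹ := by
          refine mul_le_mul (div_le_self (by positivity) (by norm_cast; omega))
            (integral_inv_pow_le k hρ (by linarith)) ?_ (by positivity)
          exact intervalIntegral.integral_nonneg (by linarith) fun t ht =>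
            by have := hρ.trans_le ht.1; positivity
      _ = 2 ^ (k + 3) * R ^ 2 * (R / ρ) ^ (k + 1) := by
          rw [div_pow, mul_pow]; ring

/-- Core of Lemma 3.4: Poincaré-type inequality for functions vanishing on a
small interior ball. -/
theorem stmt0 (n : ℕ) (hn : 2 ≤ n) :
    ∃ C : ℝ, 0 < C ∧
      ∀ (M y : EuclideanSpace ℝ (Fin n)) (ρ R : ℝ), 0 < ρ → ρ ≤ R →
        ball y ρ ⊆ ball M R →
        ∀ u : EuclideanSpace ℝ (Fin n) → ℂ, ContDiff ℝ 1 u →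
          (∀ x ∈ closedBall y ρ, u x = 0) →
          ∫ x in ball M R, ‖u x‖ ^ 2 ≤
            C * R ^ 2 * (R / ρ) ^ (n - 2) *
              (if n = 2 then Real.log (R / ρ) + 1 else 1) *
              ∫ x in ball M R, ‖fderiv ℝ u x‖ ^ 2 := by
  refine ⟨2 ^ n, by positivity, fun M y ρ R hρ hρR hsub u hu hu₀ => ?_⟩
  have : Nontrivial (EuclideanSpace ℝ (Fin n)) :=
    Module.nontrivial_of_finrank_pos (R := ℝ) (by rw [finrank_euclideanSpace_fin]; omega)
  have hy : y ∈ ball M R := hsub (mem_ball_self hρ)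
  have hball : ball M R ⊆ ball y (2 * R) :=
    ball_subset_ball' (by rw [dist_comm]; linarith [mem_ball.1 hy])
  have key := setIntegral_norm_sq_le_of_eq_zero_on_closedBall volume (convex_ball M R)
    measurableSet_ball hy hball hρ (by linarith) hu hu₀
  rw [finrank_euclideanSpace_fin] at key
  exact key.trans (mul_le_mul_of_nonneg_right (pow_div_mul_integral_inv_pow_le hn hρ hρR)
    (integral_nonneg fun _ => by positivity))
end

section
/- Let n ≥ 1, let v : ℝⁿ → ℂ be 4ℤⁿ-periodic (that is, v(x + 4k) = v(x) for all x ∈ ℝⁿ and all k ∈ ℤⁿ) and integrable on the periodicity cell □ = (−2, 2)ⁿ, and let h : ℝⁿ → ℂ be continuously differentiable with compact support. Then there exists a constant C > 0 depending only on n such that for every ε > 0: | ∫_{ℝⁿ} v(x/ε) h(x) dx − 4^{−n} (∫_□ v(ξ) dξ) (∫_{ℝⁿ} h(x) dx) | ≤ C ε (sup_{ℝⁿ} |∇h|) ‖v‖_{L¹(□)} · vol({x ∈ ℝⁿ : dist(x, supp h) ≤ 4√n ε}). -/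
/-!
Up to a null set, ℝⁿ is tiled by the open cells ε(4k + □), k ∈ ℤⁿ. Rescaling by ε and using the
periodicity of v gives ∫_cell v(x/ε) dx = εⁿ ∫_□ v on every cell, so the error committed on a cell
is ∫_cell v(x/ε) (h(x) - ⨍_cell h) dx. Its norm is at most εⁿ ‖v‖_{L¹(□)} times the oscillation of
h on the cell, which is at most 4√n ε sup |∇h| since the cell has diameter 4√n ε. Only cells
meeting supp h contribute; they lie in the closed 4√n ε-neighbourhood of supp h, and since
εⁿ = 4⁻ⁿ vol(cell), summing over them gives 4⁻ⁿ times the volume of that neighbourhood.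
-/

open MeasureTheory Metric Set Function Pointwise

namespace LatticeAveraging

section Partition

variable {α ι E : Type*} [MeasurableSpace α] {μ : Measure α} [Countable ι]
  [NormedAddCommGroup E] {P : ι → Set α} {N : Set α}

theorem hasSum_measureReal_inter (hP : ∀ k, MeasurableSet (P k)) (hPd : Pairwise (Disjoint on P))
    (hcover : ∀ᵐ x ∂μ, x ∈ ⋃ k, P k) (hN : MeasurableSet N) (hNfin : μ N ≠ ⊤) :
    HasSum (fun k => μ.real (P k ∩ N)) (μ.real N) := by
  have hsum : ∑' k, μ (P k ∩ N) = μ N := by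
    rw [← measure_iUnion (hPd.mono fun _ _ h => h.mono inter_subset_left inter_subset_left)
      (fun k => (hP k).inter hN), ← iUnion_inter, inter_comm,
      measure_inter_conull (t := ⋃ k, P k) (mem_ae_iff.mp hcover)]
  have hfin : ∀ k, μ (P k ∩ N) ≠ ⊤ := fun k => measure_ne_top_of_subset inter_subset_right hNfin
  simp only [measureReal_def]
  rw [← hsum, ENNReal.tsum_toReal_eq hfin]
  exact (ENNReal.summable_toReal (hsum ▸ hNfin)).hasSum

theorem integrable_of_integral_norm_le_measureReal_inter (hP : ∀ k, MeasurableSet (P k))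
    (hPd : Pairwise (Disjoint on P)) (hcover : ∀ᵐ x ∂μ, x ∈ ⋃ k, P k) (hN : MeasurableSet N)
    (hNfin : μ N ≠ ⊤) {f : α → E} (hf : ∀ k, IntegrableOn f (P k) μ) {B : ℝ}
    (hB : ∀ k, ∫ x in P k, ‖f x‖ ∂μ ≤ B * μ.real (P k ∩ N)) : Integrable f μ := by
  have hsum : Summable fun k => ∫ x in P k, ‖f x‖ ∂μ :=
    .of_nonneg_of_le (fun k => integral_nonneg fun _ => norm_nonneg _) hB
      ((hasSum_measureReal_inter hP hPd hcover hN hNfin).summable.mul_left B)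
  simpa only [IntegrableOn, Measure.restrict_eq_self_of_ae_mem hcover] using
    integrableOn_iUnion_of_summable_integral_norm hf hsum

theorem norm_integral_le_of_norm_setIntegral_le_measureReal_inter [NormedSpace ℝ E]
    [CompleteSpace E] (hP : ∀ k, MeasurableSet (P k))
    (hPd : Pairwise (Disjoint on P)) (hcover : ∀ᵐ x ∂μ, x ∈ ⋃ k, P k) (hN : MeasurableSet N)
    (hNfin : μ N ≠ ⊤) {f : α → E} (hf : Integrable f μ) {B : ℝ}
    (hB : ∀ k, ‖∫ x in P k, f x ∂μ‖ ≤ B * μ.real (P k ∩ N)) : ‖∫ x, f x ∂μ‖ ≤ B * μ.real N := by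
  have hbound := (hasSum_measureReal_inter hP hPd hcover hN hNfin).mul_left B
  have hcells := hasSum_integral_iUnion hP hPd hf.integrableOn
  rw [Measure.restrict_eq_self_of_ae_mem hcover] at hcells
  have hnorm : Summable fun k => ‖∫ x in P k, f x ∂μ‖ :=
    .of_nonneg_of_le (fun _ => norm_nonneg _) hB hbound.summable
  calc ‖∫ x, f x ∂μ‖ = ‖∑' k, ∫ x in P k, f x ∂μ‖ := by rw [hcells.tsum_eq]
    _ ≤ ∑' k, ‖∫ x in P k, f x ∂μ‖ := norm_tsum_le_tsum_norm hnorm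
    _ ≤ B * μ.real N := hbound.tsum_eq ▸ hnorm.tsum_le_tsum hB hbound.summable

end Partition

theorem norm_setIntegral_mul_sub_mul_setAverage_le {α 𝕜 : Type*} [MeasurableSpace α]
    [RCLike 𝕜] {μ : Measure α} {s : Set α} (hs : MeasurableSet s) (hμ0 : μ s ≠ 0) (hμ : μ s ≠ ⊤)
    {w h : α → 𝕜} (hw : IntegrableOn w s μ) (hh : IntegrableOn h s μ)
    (hwh : IntegrableOn (fun x => w x * h x) s μ) {δ : ℝ}
    (hδ : ∀ x ∈ s, ∀ y ∈ s, ‖h x - h y‖ ≤ δ) :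
    ‖∫ x in s, w x * h x ∂μ - (∫ x in s, w x ∂μ) * ⨍ x in s, h x ∂μ‖ ≤
      (∫ x in s, ‖w x‖ ∂μ) * δ := by
  have havg : ∀ x ∈ s, ‖h x - ⨍ y in s, h y ∂μ‖ ≤ δ := fun x hx =>
    mem_closedBall_iff_norm'.mp <| (convex_closedBall (h x) δ).set_average_mem isClosed_closedBall
      hμ0 hμ ((ae_restrict_iff' hs).mpr <| .of_forall fun y hy =>
        mem_closedBall_iff_norm'.mpr (hδ x hx y hy)) hh
  calc ‖∫ x in s, w x * h x ∂μ - (∫ x in s, w x ∂μ) * ⨍ x in s, h x ∂μ‖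
      = ‖∫ x in s, w x * (h x - ⨍ y in s, h y ∂μ) ∂μ‖ := by
        simp only [mul_sub]
        rw [integral_sub hwh (hw.mul_const _), integral_mul_const]
    _ ≤ ∫ x in s, ‖w x‖ * δ ∂μ := by
        refine norm_integral_le_of_norm_le (hw.norm.mul_const δ) ((ae_restrict_iff' hs).mpr ?_)
        refine .of_forall fun x hx => ?_
        rw [norm_mul]
        exact mul_le_mul_of_nonneg_left (havg x hx) (norm_nonneg _)
    _ = (∫ x in s, ‖w x‖ ∂μ) * δ := integral_mul_const δ _

theorem integrableOn_comp_smul_iff {E F : Type*} [NormedAddCommGroup E] [NormedSpace ℝ E]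
    [MeasurableSpace E] [BorelSpace E] [FiniteDimensional ℝ E] (μ : Measure E)
    [μ.IsAddHaarMeasure] [NormedAddCommGroup F] (f : E → F) {R : ℝ} (hR : R ≠ 0) (s : Set E) :
    IntegrableOn (fun x => f (R • x)) s μ ↔ IntegrableOn f (R • s) μ := by
  let e : E ≃ᵐ E := (Homeomorph.smul (Units.mk0 R hR)).toMeasurableEquiv
  have hmap : μ.map e = ENNReal.ofReal |(R ^ Module.finrank ℝ E)⁻¹| • μ :=
    Measure.map_addHaar_smul μ hR
  have hpre : e ⁻¹' (R • s) = s := by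
    change (fun x => R • x) ⁻¹' (R • s) = s
    rw [preimage_smul₀ hR, inv_smul_smul₀ hR]
  calc IntegrableOn (fun x => f (R • x)) s μ ↔ IntegrableOn (f ∘ e) (e ⁻¹' (R • s)) μ := by
        rw [hpre]; rfl
    _ ↔ IntegrableOn f (R • s) (μ.map e) := (integrableOn_map_equiv e).symm
    _ ↔ IntegrableOn f (R • s) μ := by
        rw [hmap, IntegrableOn, Measure.restrict_smul,
          integrable_smul_measure _ ENNReal.ofReal_ne_top, IntegrableOn]
        simpa using pow_pos (abs_pos.mpr hR) _

theorem subset_cthickening_tsupport_or_eqOn_zero {X M : Type*} [PseudoMetricSpace X]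
    [Zero M] [TopologicalSpace M] {h : X → M} {s : Set X} {r : ℝ}
    (hs : ∀ x ∈ s, ∀ y ∈ s, dist x y ≤ r) :
    s ⊆ cthickening r (tsupport h) ∨ EqOn h 0 s := by
  by_cases hmeet : ∃ y ∈ s, y ∈ tsupport h
  · obtain ⟨y, hy, hyT⟩ := hmeet
    exact .inl fun x hx => mem_cthickening_of_dist_le x y r _ hyT (hs x hx y hy)
  · simp only [not_exists, not_and] at hmeet
    exact .inr fun x hx => image_eq_zero_of_notMem_tsupport (hmeet x hx)

/-- For `s = ∅` the right-hand set is all of `X` (`infDist x ∅ = 0`), possibly of measure `⊤`,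
whose `toReal` is `0`; the left-hand side vanishes then as well. -/
theorem measureReal_cthickening_le {X : Type*} [PseudoMetricSpace X] [MeasurableSpace X]
    (μ : Measure X) (s : Set X) {r : ℝ} (hr : 0 ≤ r) :
    μ.real (cthickening r s) ≤ (μ {x | infDist x s ≤ r}).toReal := by
  rcases s.eq_empty_or_nonempty with rfl | hs
  · simp
  · refine le_of_eq (congrArg (fun t => (μ t).toReal) (ext fun x => ?_))
    rw [mem_cthickening_iff, ENNReal.le_ofReal_iff_toReal_le (infEDist_ne_top hs) hr]
    rfl

theorem ContDiff.lipschitzWith_iSup_norm_fderiv {E F : Type*} [NormedAddCommGroup E]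
    [NormedSpace ℝ E] [NormedAddCommGroup F] [NormedSpace ℝ F] {h : E → F}
    (hh : ContDiff ℝ 1 h) (hsupp : HasCompactSupport h) :
    LipschitzWith (⨆ x, ‖fderiv ℝ h x‖).toNNReal h := by
  have hbdd : BddAbove (range fun x => ‖fderiv ℝ h x‖) :=
    (hh.continuous_fderiv one_ne_zero).norm.bddAbove_range_of_hasCompactSupport
      (hsupp.fderiv (𝕜 := ℝ)).norm
  refine lipschitzWith_of_nnnorm_fderiv_le (hh.differentiable one_ne_zero) fun x => ?_
  rw [← NNReal.coe_le_coe, coe_nnnorm,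
    Real.coe_toNNReal _ (Real.iSup_nonneg fun _ => norm_nonneg _)]
  exact le_ciSup hbdd x

theorem exists_int_mem_Ioo_of_forall_ne {a t : ℝ} (ha : 0 < a) (ht : ∀ m : ℤ, t ≠ a * m + a / 2) :
    ∃ k : ℤ, t ∈ Ioo (a * k - a / 2) (a * k + a / 2) := by
  refine ⟨⌊t / a + 1 / 2⌋, ?_, ?_⟩
  · have hle : a * ⌊t / a + 1 / 2⌋ - a / 2 ≤ t := by
      have h : (⌊t / a + 1 / 2⌋ - 1 / 2 : ℝ) ≤ t / a := by linarith [Int.floor_le (t / a + 1 / 2)]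
      rw [le_div_iff₀ ha] at h
      linarith
    refine hle.lt_of_ne fun heq => ht (⌊t / a + 1 / 2⌋ - 1) ?_
    push_cast
    linarith
  · have h : t / a < ⌊t / a + 1 / 2⌋ + 1 / 2 := by linarith [Int.lt_floor_add_one (t / a + 1 / 2)]
    rw [div_lt_iff₀ ha] at h
    linarith

section LatticeCube

variable {ι : Type*}

def latticeCube (a : ℝ) (k : ι → ℤ) : Set (EuclideanSpace ℝ ι) :=
  {x | ∀ i, x i ∈ Ioo (a * k i - a / 2) (a * k i + a / 2)}

theorem latticeCube_eq_preimage (a : ℝ) (k : ι → ℤ) :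
    latticeCube a k = (MeasurableEquiv.toLp 2 (ι → ℝ)).symm ⁻¹'
      univ.pi fun i => Ioo (a * k i - a / 2) (a * k i + a / 2) := by
  ext x
  simp [latticeCube]

theorem measurableSet_latticeCube [Fintype ι] (a : ℝ) (k : ι → ℤ) :
    MeasurableSet (latticeCube a k) := by
  rw [latticeCube_eq_preimage]
  exact MeasurableEquiv.measurable _ (.univ_pi fun _ => measurableSet_Ioo)

theorem volume_latticeCube [Fintype ι] (a : ℝ) (k : ι → ℤ) :
    volume (latticeCube a k) = ENNReal.ofReal a ^ Fintype.card ι := by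
  rw [latticeCube_eq_preimage, (EuclideanSpace.volume_preserving_symm_measurableEquiv_toLp ι
    ).measure_preimage (MeasurableSet.univ_pi fun _ => measurableSet_Ioo).nullMeasurableSet,
    volume_pi_pi]
  simp only [Real.volume_Ioo, add_sub_sub_cancel, add_halves, Finset.prod_const, Finset.card_univ]

theorem measureReal_latticeCube [Fintype ι] {a : ℝ} (ha : 0 ≤ a) (k : ι → ℤ) :
    volume.real (latticeCube a k) = a ^ Fintype.card ι := by
  rw [measureReal_def, volume_latticeCube, ENNReal.toReal_pow, ENNReal.toReal_ofReal ha]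

theorem pairwise_disjoint_latticeCube {a : ℝ} (ha : 0 < a) :
    Pairwise (Disjoint on latticeCube (ι := ι) a) := by
  refine fun k k' hne => disjoint_left.mpr fun x hx hx' => hne (funext fun i => ?_)
  have h := hx i
  have h' := hx' i
  simp only [mem_Ioo] at h h'
  have hlt : (k i : ℝ) < k' i + 1 := lt_of_mul_lt_mul_left (by linarith) ha.le
  have hlt' : (k' i : ℝ) < k i + 1 := lt_of_mul_lt_mul_left (by linarith) ha.le
  have : k i < k' i + 1 := by exact_mod_cast hlt
  have : k' i < k i + 1 := by exact_mod_cast hlt'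
  omega

theorem volume_setOf_apply_mem_eq_zero [Fintype ι] {s : Set ℝ} (hs : volume s = 0) (i : ι) :
    volume {x : EuclideanSpace ℝ ι | x i ∈ s} = 0 :=
  (EuclideanSpace.volume_preserving_symm_measurableEquiv_toLp ι).measure_preimage_equiv
    (eval i ⁻¹' s) ▸ Measure.pi_eval_preimage_null _ hs

theorem ae_mem_iUnion_latticeCube [Fintype ι] {a : ℝ} (ha : 0 < a) :
    ∀ᵐ x ∂(volume : Measure (EuclideanSpace ℝ ι)), x ∈ ⋃ k, latticeCube a k := by
  set S := range fun m : ℤ => a * m + a / 2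
  have hnull : volume (⋃ i, {x : EuclideanSpace ℝ ι | x i ∈ S}) = 0 :=
    measure_iUnion_null fun i =>
      volume_setOf_apply_mem_eq_zero ((countable_range _).measure_zero volume) i
  refine measure_mono_null (fun x hx => ?_) hnull
  by_contra hxS
  simp only [mem_iUnion, mem_ofPred_eq, not_exists, S, mem_range, not_exists] at hxS
  choose k hk using fun i => exists_int_mem_Ioo_of_forall_ne ha fun m hm => hxS i m hm.symm
  exact hx (mem_iUnion.mpr ⟨k, hk⟩)

theorem dist_le_of_mem_latticeCube [Fintype ι] {a : ℝ} (ha : 0 ≤ a) {k : ι → ℤ}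
    {x y : EuclideanSpace ℝ ι} (hx : x ∈ latticeCube a k) (hy : y ∈ latticeCube a k) :
    dist x y ≤ a * √(Fintype.card ι) := by
  have hcoord : ∀ i, dist (x i) (y i) ≤ a := fun i => by
    have h := hx i
    have h' := hy i
    simp only [mem_Ioo] at h h'
    rw [Real.dist_eq, abs_le]
    constructor <;> linarith
  calc dist x y = √(∑ i, dist (x i) (y i) ^ 2) := EuclideanSpace.dist_eq x y
    _ ≤ √(∑ _i : ι, a ^ 2) := Real.sqrt_le_sqrt (Finset.sum_le_sum fun i _ =>
        pow_le_pow_left₀ dist_nonneg (hcoord i) 2)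
    _ = a * √(Fintype.card ι) := by
        rw [Finset.sum_const, Finset.card_univ, nsmul_eq_mul, Real.sqrt_mul' _ (sq_nonneg a),
          Real.sqrt_sq ha, mul_comm]

theorem smul_latticeCube [Fintype ι] {ε : ℝ} (hε : 0 < ε) (a : ℝ) (k : ι → ℤ) :
    ε • latticeCube a k = latticeCube (ε * a) k := by
  ext x
  rw [mem_smul_set_iff_inv_smul_mem₀ hε.ne']
  refine forall_congr' fun i => ?_
  simp only [PiLp.smul_apply, smul_eq_mul, mem_Ioo, ← div_eq_inv_mul, lt_div_iff₀ hε,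
    div_lt_iff₀ hε]
  constructor <;> rintro ⟨h, h'⟩ <;> constructor <;> linarith

theorem latticeCube_eq_preimage_sub (a : ℝ) (k : ι → ℤ) :
    latticeCube a k = (· - WithLp.toLp 2 fun i => a * k i) ⁻¹' latticeCube a 0 := by
  ext x
  refine forall_congr' fun i => ?_
  simp only [PiLp.sub_apply, Pi.zero_apply, Int.cast_zero, mul_zero, zero_sub, zero_add, mem_Ioo]
  constructor <;> rintro ⟨h, h'⟩ <;> constructor <;> linarith

end LatticeCube

def IsLatticePeriodic {ι F : Type*} (a : ℝ) (w : EuclideanSpace ℝ ι → F) : Prop :=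
  ∀ (x : EuclideanSpace ℝ ι) (k : ι → ℤ), w (WithLp.toLp 2 fun i => x i + a * k i) = w x

namespace IsLatticePeriodic

variable {ι F : Type*} {a ε : ℝ} {w : EuclideanSpace ℝ ι → F}

theorem apply_sub (hw : IsLatticePeriodic a w) (x : EuclideanSpace ℝ ι) (k : ι → ℤ) :
    w (x - WithLp.toLp 2 fun i => a * k i) = w x := by
  rw [← hw _ k]
  congr
  ext i
  simp

theorem norm [Norm F] (hw : IsLatticePeriodic a w) : IsLatticePeriodic a fun x => ‖w x‖ :=
  fun x k => congrArg _ (hw x k)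

variable [Fintype ι] [NormedAddCommGroup F]

theorem integrableOn_latticeCube_iff (hw : IsLatticePeriodic a w) (k : ι → ℤ) :
    IntegrableOn w (latticeCube a k) ↔ IntegrableOn w (latticeCube a 0) := by
  rw [latticeCube_eq_preimage_sub a k]
  conv_rhs => rw [← (measurePreserving_sub_right volume _).integrableOn_comp_preimage
    (MeasurableEquiv.subRight (WithLp.toLp 2 fun i => a * k i)).measurableEmbedding]
  simp only [comp_def, hw.apply_sub]

theorem setIntegral_latticeCube [NormedSpace ℝ F] (hw : IsLatticePeriodic a w) (k : ι → ℤ) :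
    ∫ x in latticeCube a k, w x = ∫ x in latticeCube a 0, w x := by
  rw [latticeCube_eq_preimage_sub a k]
  simpa only [hw.apply_sub] using (measurePreserving_sub_right volume _).setIntegral_preimage_emb
    (MeasurableEquiv.subRight (WithLp.toLp 2 fun i => a * k i)).measurableEmbedding w _

theorem integrableOn_latticeCube_comp_inv_smul (hw : IsLatticePeriodic a w)
    (hint : IntegrableOn w (latticeCube a 0)) (hε : 0 < ε) (k : ι → ℤ) :
    IntegrableOn (fun x => w (ε⁻¹ • x)) (latticeCube (ε * a) k) := by
  rw [integrableOn_comp_smul_iff volume w (inv_ne_zero hε.ne'), smul_latticeCube (inv_pos.mpr hε),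
    inv_mul_cancel_left₀ hε.ne']
  exact (hw.integrableOn_latticeCube_iff k).mpr hint

theorem setIntegral_latticeCube_comp_inv_smul [NormedSpace ℝ F] (hw : IsLatticePeriodic a w)
    (hε : 0 < ε) (k : ι → ℤ) :
    ∫ x in latticeCube (ε * a) k, w (ε⁻¹ • x) =
      ε ^ Fintype.card ι • ∫ x in latticeCube a 0, w x := by
  rw [Measure.setIntegral_comp_smul_of_pos volume w _ (inv_pos.mpr hε),
    smul_latticeCube (inv_pos.mpr hε), inv_mul_cancel_left₀ hε.ne', hw.setIntegral_latticeCube,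
    finrank_euclideanSpace, inv_pow, inv_inv]

end IsLatticePeriodic

section Averaging

variable {ι : Type*} [Fintype ι] {a ε : ℝ} {v h : EuclideanSpace ℝ ι → ℂ} {K : NNReal}

theorem latticeCube_subset_cthickening_or_eqOn_zero (ha : 0 < a) (hε : 0 < ε)
    (h : EuclideanSpace ℝ ι → ℂ) (k : ι → ℤ) :
    latticeCube (ε * a) k ⊆ cthickening (a * √(Fintype.card ι) * ε) (tsupport h) ∨
      EqOn h 0 (latticeCube (ε * a) k) :=
  subset_cthickening_tsupport_or_eqOn_zero fun x hx y hy =>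
    (dist_le_of_mem_latticeCube (by positivity) hx hy).trans_eq (by ring)

theorem integrableOn_latticeCube_comp_inv_smul_mul (hε : 0 < ε) (hv : IsLatticePeriodic a v)
    (hvQ : IntegrableOn v (latticeCube a 0)) (hh : Continuous h) (hsupp : HasCompactSupport h)
    (k : ι → ℤ) : IntegrableOn (fun x => v (ε⁻¹ • x) * h x) (latticeCube (ε * a) k) :=
  (hv.integrableOn_latticeCube_comp_inv_smul hvQ hε k).mul_bdd hh.aestronglyMeasurable
    (.of_forall (hh.bounded_above_of_compact_support hsupp).choose_spec)

theorem integrable_comp_inv_smul_mul (ha : 0 < a) (hε : 0 < ε) (hv : IsLatticePeriodic a v)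
    (hvQ : IntegrableOn v (latticeCube a 0)) (hh : Continuous h) (hsupp : HasCompactSupport h) :
    Integrable fun x => v (ε⁻¹ • x) * h x := by
  obtain ⟨C, hC⟩ := hh.bounded_above_of_compact_support hsupp
  have hC0 : 0 ≤ C := (norm_nonneg _).trans (hC 0)
  have hvQ0 : 0 ≤ ∫ ξ in latticeCube a 0, ‖v ξ‖ := integral_nonneg fun _ => norm_nonneg _
  refine integrable_of_integral_norm_le_measureReal_inter (measurableSet_latticeCube (ε * a))
    (pairwise_disjoint_latticeCube (by positivity)) (ae_mem_iUnion_latticeCube (by positivity))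
    isClosed_cthickening.measurableSet
    (hsupp.isCompact.cthickening (r := a * √(Fintype.card ι) * ε)).measure_lt_top.ne
    (integrableOn_latticeCube_comp_inv_smul_mul hε hv hvQ hh hsupp)
    (B := C * (a ^ Fintype.card ι)⁻¹ * ∫ ξ in latticeCube a 0, ‖v ξ‖) fun k => ?_
  rcases latticeCube_subset_cthickening_or_eqOn_zero ha hε h k with hsub | hzero
  · rw [inter_eq_left.mpr hsub, measureReal_latticeCube (by positivity)]
    calc ∫ x in latticeCube (ε * a) k, ‖v (ε⁻¹ • x) * h x‖
        ≤ ∫ x in latticeCube (ε * a) k, ‖v (ε⁻¹ • x)‖ * C :=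
          setIntegral_mono_on (integrableOn_latticeCube_comp_inv_smul_mul hε hv hvQ hh hsupp k).norm
            ((hv.norm.integrableOn_latticeCube_comp_inv_smul hvQ.norm hε k).mul_const C)
            (measurableSet_latticeCube _ k) fun x _ => by
              rw [norm_mul]; exact mul_le_mul_of_nonneg_left (hC x) (norm_nonneg _)
      _ = C * (a ^ Fintype.card ι)⁻¹ * (∫ ξ in latticeCube a 0, ‖v ξ‖) *
            (ε * a) ^ Fintype.card ι := by
          rw [integral_mul_const, hv.norm.setIntegral_latticeCube_comp_inv_smul hε, smul_eq_mul,
            mul_pow]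
          field_simp
  · rw [setIntegral_eq_zero_of_forall_eq_zero fun x hx => by simp [hzero hx]]
    exact mul_nonneg (by positivity) measureReal_nonneg

theorem norm_setIntegral_latticeCube_sub_le (ha : 0 < a) (hε : 0 < ε)
    (hv : IsLatticePeriodic a v) (hvQ : IntegrableOn v (latticeCube a 0)) (hK : LipschitzWith K h)
    (hsupp : HasCompactSupport h) (k : ι → ℤ) :
    ‖∫ x in latticeCube (ε * a) k, (v (ε⁻¹ • x) * h x -
        ((a : ℂ) ^ Fintype.card ι)⁻¹ * (∫ ξ in latticeCube a 0, v ξ) * h x)‖ ≤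
      (a ^ Fintype.card ι)⁻¹ * (∫ ξ in latticeCube a 0, ‖v ξ‖) *
        (K * (a * √(Fintype.card ι) * ε)) * volume.real (latticeCube (ε * a) k) := by
  set s := latticeCube (ε * a) k
  have hvol : volume.real s = (ε * a) ^ Fintype.card ι := measureReal_latticeCube (by positivity) k
  have hμ0 : volume s ≠ 0 := by
    rw [volume_latticeCube]
    exact pow_ne_zero _ (ENNReal.ofReal_pos.mpr (by positivity)).ne'
  have hμ : volume s ≠ ⊤ := by
    rw [volume_latticeCube]
    exact ENNReal.pow_ne_top ENNReal.ofReal_ne_top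
  have hhs : IntegrableOn h s := (hK.continuous.integrable_of_hasCompactSupport hsupp).integrableOn
  have hvh := integrableOn_latticeCube_comp_inv_smul_mul hε hv hvQ hK.continuous hsupp k
  have hosc : ∀ x ∈ s, ∀ y ∈ s, ‖h x - h y‖ ≤ K * (a * √(Fintype.card ι) * ε) := fun x hx y hy => by
    rw [← dist_eq_norm]
    exact (hK.dist_le_mul x y).trans (mul_le_mul_of_nonneg_left
      ((dist_le_of_mem_latticeCube (by positivity) hx hy).trans_eq (by ring)) K.coe_nonneg)
  have hmean : (∫ x in s, v (ε⁻¹ • x)) * ⨍ x in s, h x =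
      ((a : ℂ) ^ Fintype.card ι)⁻¹ * (∫ ξ in latticeCube a 0, v ξ) * ∫ x in s, h x := by
    rw [hv.setIntegral_latticeCube_comp_inv_smul hε, setAverage_eq, hvol, Complex.real_smul,
      Complex.real_smul]
    have : (ε : ℂ) ≠ 0 := by exact_mod_cast hε.ne'
    push_cast [mul_pow]
    field_simp
  rw [integral_sub hvh (hhs.const_mul _), integral_const_mul, ← hmean]
  calc _ ≤ _ := norm_setIntegral_mul_sub_mul_setAverage_le (measurableSet_latticeCube _ k) hμ0 hμ
        (hv.integrableOn_latticeCube_comp_inv_smul hvQ hε k) hhs hvh hosc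
    _ = _ := by
        rw [hv.norm.setIntegral_latticeCube_comp_inv_smul hε, smul_eq_mul, hvol, mul_pow]
        field_simp

theorem norm_integral_comp_inv_smul_mul_sub_le (ha : 0 < a) (hε : 0 < ε)
    (hv : IsLatticePeriodic a v) (hvQ : IntegrableOn v (latticeCube a 0)) (hK : LipschitzWith K h)
    (hsupp : HasCompactSupport h) :
    ‖(∫ x, v (ε⁻¹ • x) * h x) -
        ((a : ℂ) ^ Fintype.card ι)⁻¹ * (∫ ξ in latticeCube a 0, v ξ) * ∫ x, h x‖ ≤
      (a ^ Fintype.card ι)⁻¹ * (∫ ξ in latticeCube a 0, ‖v ξ‖) *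
        (K * (a * √(Fintype.card ι) * ε)) *
        volume.real (cthickening (a * √(Fintype.card ι) * ε) (tsupport h)) := by
  have hvh := integrable_comp_inv_smul_mul ha hε hv hvQ hK.continuous hsupp
  have hh := (hK.continuous.integrable_of_hasCompactSupport (μ := volume) hsupp).const_mul
    (((a : ℂ) ^ Fintype.card ι)⁻¹ * ∫ ξ in latticeCube a 0, v ξ)
  rw [← integral_const_mul, ← integral_sub hvh hh]
  refine norm_integral_le_of_norm_setIntegral_le_measureReal_inter
    (measurableSet_latticeCube (ε * a)) (pairwise_disjoint_latticeCube (by positivity))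
    (ae_mem_iUnion_latticeCube (by positivity)) isClosed_cthickening.measurableSet
    (IsCompact.measure_lt_top (μ := volume) hsupp.isCompact.cthickening).ne (hvh.sub hh) fun k => ?_
  rcases latticeCube_subset_cthickening_or_eqOn_zero ha hε h k with hsub | hzero
  · rw [inter_eq_left.mpr hsub]
    exact norm_setIntegral_latticeCube_sub_le ha hε hv hvQ hK hsupp k
  · rw [setIntegral_eq_zero_of_forall_eq_zero fun x hx => by simp [hzero hx], norm_zero]
    have : 0 ≤ ∫ ξ in latticeCube a 0, ‖v ξ‖ := integral_nonneg fun _ => norm_nonneg _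
    positivity

end Averaging

end LatticeAveraging

open LatticeAveraging in
/-- Lemma 3.5: two-scale averaging of a 4ℤⁿ-periodic rapidly oscillating factor
against a slowly varying compactly supported test function. -/
theorem stmt10 (n : ℕ) (hn : 1 ≤ n) :
    ∃ C : ℝ, 0 < C ∧
      ∀ v : EuclideanSpace ℝ (Fin n) → ℂ,
        (∀ (x : EuclideanSpace ℝ (Fin n)) (k : Fin n → ℤ),
          v (WithLp.toLp 2 (fun i => x i + 4 * (k i : ℝ))) = v x) →
        IntegrableOn v {ξ : EuclideanSpace ℝ (Fin n) | ∀ i, ξ i ∈ Set.Ioo (-2 : ℝ) 2} →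
        ∀ h : EuclideanSpace ℝ (Fin n) → ℂ, ContDiff ℝ 1 h → HasCompactSupport h →
          ∀ ε : ℝ, 0 < ε →
            ‖(∫ x, v (ε⁻¹ • x) * h x) -
                ((4 : ℂ) ^ n)⁻¹ *
                  (∫ ξ in {ξ : EuclideanSpace ℝ (Fin n) | ∀ i, ξ i ∈ Set.Ioo (-2 : ℝ) 2}, v ξ) *
                  (∫ x, h x)‖ ≤
              C * ε * (⨆ x, ‖fderiv ℝ h x‖) *
                (∫ ξ in {ξ : EuclideanSpace ℝ (Fin n) | ∀ i, ξ i ∈ Set.Ioo (-2 : ℝ) 2}, ‖v ξ‖) *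
                (volume {x : EuclideanSpace ℝ (Fin n) |
                  Metric.infDist x (tsupport h) ≤ 4 * Real.sqrt n * ε}).toReal := by
  refine ⟨4 * √n / 4 ^ n, div_pos (mul_pos four_pos (Real.sqrt_pos.mpr (by exact_mod_cast hn)))
    (by positivity), fun v hv hvQ h hh hsupp ε hε => ?_⟩
  have hQ : {ξ : EuclideanSpace ℝ (Fin n) | ∀ i, ξ i ∈ Ioo (-2 : ℝ) 2} = latticeCube 4 0 := by
    ext
    simp only [latticeCube]
    norm_num
  have hM : 0 ≤ ⨆ x, ‖fderiv ℝ h x‖ := Real.iSup_nonneg fun _ => norm_nonneg _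
  have hvQ0 : 0 ≤ ∫ ξ in latticeCube 4 0, ‖v ξ‖ := integral_nonneg fun _ => norm_nonneg _
  have key := norm_integral_comp_inv_smul_mul_sub_le (by norm_num) hε hv (hQ ▸ hvQ)
    (hh.lipschitzWith_iSup_norm_fderiv hsupp) hsupp
  rw [Fintype.card_fin, Real.coe_toNNReal _ hM] at key
  rw [hQ]
  calc _ ≤ _ := key
    _ = 4 * √n / 4 ^ n * ε * (⨆ x, ‖fderiv ℝ h x‖) * (∫ ξ in latticeCube 4 0, ‖v ξ‖) *
          volume.real (cthickening (4 * √n * ε) (tsupport h)) := by ring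
    _ ≤ _ := mul_le_mul_of_nonneg_left (measureReal_cthickening_le _ _ (by positivity))
          (mul_nonneg (mul_nonneg (by positivity) hM) hvQ0)
end
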